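/- If an infinite word $w$ over an alphabet of size $k$ avoids $\alpha^+$-powers (i.e., no factor of $w$ has exponent exceeding $\alpha$), then $w$ is circularly $(2\alpha)^+$-power-free: for all words $x_1, t, x_2$ with $x_1 t x_2$ a factor of $w$, the word $x_2 x_1$ is not a $\beta$-power for any $\beta > 2\alpha$. -/

import Mathlib

/-- `u` occurs as a factor of the infinite word `w` (at some position `i`). -/
def FactorOf {α : Type*} (u : List α) (w : ℕ → α) : Prop :=
  ∃ i : ℕ, u = (List.range u.length).map (fun k => w (i + k))

/-- `p` is a period of the finite word `v`. -/
def HasPeriod {α : Type*} (v : List α) (p : ℕ) : Prop :=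
  0 < p ∧ p ≤ v.length ∧ ∀ i : ℕ, i + p < v.length → v[i + p]? = v[i]?

/-!
Both `x₁` and `x₂` are factors of `w`. Each of them is also a factor of `x₂ x₁`, so it is
either no longer than the period `p`, or it inherits the period `p` and then is at most
`a p` long since `w` is `a⁺`-power-free. Hence `|x₂ x₁| = |x₂| + |x₁| ≤ 2 a p`.
-/

namespace FactorOf

variable {α : Type*} {u v : List α} {w : ℕ → α}

lemma of_append_left (h : FactorOf (u ++ v) w) : FactorOf u w := by
  obtain ⟨i, hi⟩ := h
  refine ⟨i, ?_⟩
  have := congrArg (List.take u.length) hi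
  simpa [List.take_left, ← List.map_take, List.take_range,
    Nat.min_eq_left (by simp : u.length ≤ (u ++ v).length)] using this

lemma of_append_right (h : FactorOf (u ++ v) w) : FactorOf v w := by
  obtain ⟨i, hi⟩ := h
  refine ⟨i + u.length, ?_⟩
  have := congrArg (List.drop u.length) hi
  simp only [List.drop_left, List.length_append, List.range_add, List.map_append,
    List.map_map] at this
  rw [List.drop_append_of_le_length (by simp), List.drop_eq_nil_of_le (by simp),
    List.nil_append] at this
  simpa [Function.comp_def, Nat.add_comm, Nat.add_left_comm] using this

lemma of_isInfix (h : FactorOf v w) (huv : u <:+: v) : FactorOf u w := by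
  obtain ⟨s, t, rfl⟩ := huv
  exact (of_append_left h).of_append_right

end FactorOf

namespace HasPeriod

variable {α : Type*} {u v : List α} {p : ℕ}

lemma of_append_left (h : HasPeriod (u ++ v) p) (hp : p ≤ u.length) : HasPeriod u p := by
  obtain ⟨hp0, -, hper⟩ := h
  refine ⟨hp0, hp, fun i hi => ?_⟩
  have h1 := hper i (by simp; omega)
  rwa [List.getElem?_append_left (by omega), List.getElem?_append_left (by omega)] at h1

lemma of_append_right (h : HasPeriod (u ++ v) p) (hp : p ≤ v.length) : HasPeriod v p := by
  obtain ⟨hp0, -, hper⟩ := h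
  refine ⟨hp0, hp, fun i hi => ?_⟩
  have h1 := hper (u.length + i) (by simp; omega)
  rw [List.getElem?_append_right (by omega), List.getElem?_append_right (by omega)] at h1
  rwa [show u.length + i + p - u.length = i + p by omega,
    show u.length + i - u.length = i by omega] at h1

lemma of_isInfix (h : HasPeriod v p) (huv : u <:+: v) (hp : p ≤ u.length) :
    HasPeriod u p := by
  obtain ⟨s, t, rfl⟩ := huv
  exact (h.of_append_left (by simp; omega)).of_append_right hp

end HasPeriod

lemma length_le_of_isInfix_of_hasPeriod {α : Type*} {a : ℚ} (ha : 1 ≤ a) {w : ℕ → α}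
    (hfree : ∀ (v : List α) (p : ℕ), FactorOf v w → HasPeriod v p → (v.length : ℚ) ≤ a * p)
    {u v : List α} {p : ℕ} (hu : FactorOf u w) (hv : HasPeriod v p) (huv : u <:+: v) :
    (u.length : ℚ) ≤ a * p := by
  rcases le_or_gt u.length p with hshort | hlong
  · calc (u.length : ℚ) ≤ 1 * p := by rw [one_mul]; exact_mod_cast hshort
      _ ≤ a * p := by gcongr
  · exact hfree u p hu (hv.of_isInfix huv hlong.le)

theorem power_free_imp_circularly_double_power_free {k : ℕ} (a : ℚ) (ha : 1 ≤ a)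
    (w : ℕ → Fin k)
    (hfree : ∀ (v : List (Fin k)) (p : ℕ), FactorOf v w → HasPeriod v p →
      (v.length : ℚ) ≤ a * p) :
    ∀ (x₁ t x₂ : List (Fin k)) (p : ℕ), FactorOf (x₁ ++ t ++ x₂) w →
      HasPeriod (x₂ ++ x₁) p → ((x₂ ++ x₁).length : ℚ) ≤ 2 * a * p := by
  intro x₁ t x₂ p hfac hper
  have h₁ : (x₁.length : ℚ) ≤ a * p :=
    length_le_of_isInfix_of_hasPeriod ha hfree hfac.of_append_left.of_append_left hper
      (List.suffix_append x₂ x₁).isInfix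
  have h₂ : (x₂.length : ℚ) ≤ a * p :=
    length_le_of_isInfix_of_hasPeriod ha hfree hfac.of_append_right hper
      (List.prefix_append x₂ x₁).isInfix
  rw [List.length_append, Nat.cast_add]
  linarith
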